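/- arXiv:1001.2296 — 2 statements merged into one kernel-verified Lean document; each statement's English description precedes it below -/
import Mathlib

section
/- Comparison of the caloric extension with local averages: for every bounded measurable u₀ : ℝⁿ → ℝ^l with caloric extension ũ₀, every x ∈ ℝⁿ, every t > 0 and every K > 0, letting c^K_{x,t} denote the average of u₀ over the ball B_{K√t}(x), one has |ũ₀(x,t) - c^K_{x,t}| ≤ K^n [u₀]_{BMO_{K√t}} + 2 ‖u₀‖_{L^∞(ℝⁿ)} (4π)^{-n/2} ∫_{ℝⁿ \ B_K(0)} e^{-|y|²/4} dy. -/
open MeasureTheory Metric Set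
open scoped ENNReal

noncomputable section

abbrev Rn (n : ℕ) : Type := EuclideanSpace ℝ (Fin n)

/-- The heat kernel `G(x,t) = (4πt)^{-n/2} e^{-|x|²/(4t)}` on `ℝⁿ`. -/
def heatKernel (n : ℕ) (x : Rn n) (t : ℝ) : ℝ :=
  (4 * Real.pi * t) ^ (-(n : ℝ) / 2) * Real.exp (-‖x‖ ^ 2 / (4 * t))

/-- Caloric extension `ũ₀(x,t) = ∫ G(x-y,t) u₀(y) dy` (componentwise). -/
def caloricExt {n : ℕ} {F : Type*} [NormedAddCommGroup F] [NormedSpace ℝ F]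
    (u₀ : Rn n → F) (x : Rn n) (t : ℝ) : F :=
  ∫ y, heatKernel n (x - y) t • u₀ y

/-- Average of `f` over the ball `B_r(x)`. -/
def ballAvg {n : ℕ} {F : Type*} [NormedAddCommGroup F] [NormedSpace ℝ F]
    (f : Rn n → F) (x : Rn n) (r : ℝ) : F :=
  ⨍ y in ball x r, f y

/-- The set of numbers `r^{-n} ∫_{B_r(x)} |f - f_{x,r}|`, for `x ∈ ℝⁿ` and `0 < r ≤ R`. -/
def bmoSet {n : ℕ} {F : Type*} [NormedAddCommGroup F] [NormedSpace ℝ F]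
    (f : Rn n → F) (R : ℝ≥0∞) : Set ℝ :=
  {a | ∃ x r, 0 < r ∧ ENNReal.ofReal r ≤ R ∧
    a = (r ^ n)⁻¹ * ∫ y in ball x r, ‖f y - ballAvg f x r‖}

/-- The BMO_R seminorm `[f]_{BMO_R}`. -/
def bmoSeminorm {n : ℕ} {F : Type*} [NormedAddCommGroup F] [NormedSpace ℝ F]
    (f : Rn n → F) (R : ℝ≥0∞) : ℝ :=
  sSup (bmoSet f R)

/-- Spatial partial derivative in direction `e_i` of a time-dependent map. -/
def spd {n : ℕ} {F : Type*} [NormedAddCommGroup F] [NormedSpace ℝ F]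
    (u : Rn n → ℝ → F) (x : Rn n) (t : ℝ) (i : Fin n) : F :=
  fderiv ℝ (fun z => u z t) x (EuclideanSpace.single i 1)

/-- Carleson set of the gradient: numbers `r^{-n} ∫_{P_r(x,r²)} |∇u|²` for `0 < r ≤ R`. -/
def gradCarlesonSet {n : ℕ} {F : Type*} [NormedAddCommGroup F] [NormedSpace ℝ F]
    (u : Rn n → ℝ → F) (R : ℝ≥0∞) : Set ℝ :=
  {a | ∃ x r, 0 < r ∧ ENNReal.ofReal r ≤ R ∧
    a = (r ^ n)⁻¹ * ∫ t in Ioc (0:ℝ) (r ^ 2), ∫ y in ball x r,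
      ‖fderiv ℝ (fun z => u z t) y‖ ^ 2}

/-- Duhamel operator `𝕊f(x,t) = ∫_0^t ∫ G(x-y,t-s) f(y,s) dy ds`. -/
def duhamel {n : ℕ} {F : Type*} [NormedAddCommGroup F] [NormedSpace ℝ F]
    (f : Rn n → ℝ → F) (x : Rn n) (t : ℝ) : F :=
  ∫ s in Ioc (0:ℝ) t, ∫ y, heatKernel n (x - y) (t - s) • f y s

/-! Constituent sets for the norms of the spaces `X_T`, `Y_T`, `Z_T` (with `T ∈ (0,∞]`). -/

def xSet1 {n : ℕ} {F : Type*} [NormedAddCommGroup F] [NormedSpace ℝ F]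
    (f : Rn n → ℝ → F) (T : ℝ≥0∞) : Set ℝ :=
  {a | ∃ x t, 0 < t ∧ ENNReal.ofReal t ≤ T ∧ a = ‖f x t‖}

def xSet2 {n : ℕ} {F : Type*} [NormedAddCommGroup F] [NormedSpace ℝ F]
    (f : Rn n → ℝ → F) (T : ℝ≥0∞) : Set ℝ :=
  {a | ∃ x t, 0 < t ∧ ENNReal.ofReal t ≤ T ∧
    a = Real.sqrt t * ‖fderiv ℝ (fun z => f z t) x‖}

def xSet3 {n : ℕ} {F : Type*} [NormedAddCommGroup F] [NormedSpace ℝ F]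
    (f : Rn n → ℝ → F) (T : ℝ≥0∞) : Set ℝ :=
  {a | ∃ x r, 0 < r ∧ ENNReal.ofReal (r ^ 2) ≤ T ∧
    a = (r ^ n)⁻¹ * ∫ t in Ioc (0:ℝ) (r ^ 2), ∫ y in ball x r,
      ‖fderiv ℝ (fun z => f z t) y‖ ^ 2}

/-- Membership in `X_T`. -/
def MemX {n : ℕ} {F : Type*} [NormedAddCommGroup F] [NormedSpace ℝ F]
    (f : Rn n → ℝ → F) (T : ℝ≥0∞) : Prop :=
  BddAbove (xSet1 f T) ∧ BddAbove (xSet2 f T) ∧ BddAbove (xSet3 f T)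

/-- `‖f‖_{X_T}`. -/
def xNorm {n : ℕ} {F : Type*} [NormedAddCommGroup F] [NormedSpace ℝ F]
    (f : Rn n → ℝ → F) (T : ℝ≥0∞) : ℝ :=
  sSup (xSet2 f T) + Real.sqrt (sSup (xSet3 f T))

/-- `|||f|||_{X_T}`. -/
def xNormFull {n : ℕ} {F : Type*} [NormedAddCommGroup F] [NormedSpace ℝ F]
    (f : Rn n → ℝ → F) (T : ℝ≥0∞) : ℝ :=
  sSup (xSet1 f T) + xNorm f T

def ySet1 {n : ℕ} {F : Type*} [NormedAddCommGroup F] [NormedSpace ℝ F]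
    (f : Rn n → ℝ → F) (T : ℝ≥0∞) : Set ℝ :=
  {a | ∃ x t, 0 < t ∧ ENNReal.ofReal t ≤ T ∧ a = t * ‖f x t‖}

def ySet2 {n : ℕ} {F : Type*} [NormedAddCommGroup F] [NormedSpace ℝ F]
    (f : Rn n → ℝ → F) (T : ℝ≥0∞) : Set ℝ :=
  {a | ∃ x r, 0 < r ∧ ENNReal.ofReal (r ^ 2) ≤ T ∧
    a = (r ^ n)⁻¹ * ∫ t in Ioc (0:ℝ) (r ^ 2), ∫ y in ball x r, ‖f y t‖}

/-- Membership in `Y_T`. -/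
def MemY {n : ℕ} {F : Type*} [NormedAddCommGroup F] [NormedSpace ℝ F]
    (f : Rn n → ℝ → F) (T : ℝ≥0∞) : Prop :=
  BddAbove (ySet1 f T) ∧ BddAbove (ySet2 f T)

/-- `‖f‖_{Y_T}`. -/
def yNorm {n : ℕ} {F : Type*} [NormedAddCommGroup F] [NormedSpace ℝ F]
    (f : Rn n → ℝ → F) (T : ℝ≥0∞) : ℝ :=
  sSup (ySet1 f T) + sSup (ySet2 f T)

def zSet1 {n : ℕ} {F : Type*} [NormedAddCommGroup F] [NormedSpace ℝ F]
    (f : Rn n → ℝ → F) (T : ℝ≥0∞) : Set ℝ :=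
  {a | ∃ x t, 0 < t ∧ ENNReal.ofReal t ≤ T ∧ a = Real.sqrt t * ‖f x t‖}

def zSet2 {n : ℕ} {F : Type*} [NormedAddCommGroup F] [NormedSpace ℝ F]
    (f : Rn n → ℝ → F) (T : ℝ≥0∞) : Set ℝ :=
  {a | ∃ x r, 0 < r ∧ ENNReal.ofReal (r ^ 2) ≤ T ∧
    a = (r ^ n)⁻¹ * ∫ t in Ioc (0:ℝ) (r ^ 2), ∫ y in ball x r, ‖f y t‖ ^ 2}

/-- Membership in `Z_T`. -/
def MemZ {n : ℕ} {F : Type*} [NormedAddCommGroup F] [NormedSpace ℝ F]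
    (f : Rn n → ℝ → F) (T : ℝ≥0∞) : Prop :=
  BddAbove (zSet1 f T) ∧ BddAbove (zSet2 f T)

/-- `‖f‖_{Z_T}`. -/
def zNorm {n : ℕ} {F : Type*} [NormedAddCommGroup F] [NormedSpace ℝ F]
    (f : Rn n → ℝ → F) (T : ℝ≥0∞) : ℝ :=
  sSup (zSet1 f T) + Real.sqrt (sSup (zSet2 f T))

end

/-!
The heat kernel is a probability density, so `ũ₀(x,t) - c = ∫ G(x-y,t) (u₀(y) - c) dy` for any
constant `c`; take `c` the average over `B = B_{K√t}(x)`. On `B` bound `G` by its peak value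
`(4πt)^{-n/2}`, so `B` contributes at most `K^n (4π)^{-n/2} [u₀]_{BMO_{K√t}}`. Off `B` bound
`|u₀ - c| ≤ 2‖u₀‖_∞`; the remaining Gaussian tail mass is computed by the parabolic scaling
`y = x - √t w`.
-/

open Real
open scoped Pointwise

section HeatKernel

variable (n : ℕ) {t : ℝ}

lemma heatKernel_nonneg (z : Rn n) (ht : 0 ≤ t) : 0 ≤ heatKernel n z t := by
  unfold heatKernel
  have : 0 ≤ (4 * π * t) ^ (-(n : ℝ) / 2) := rpow_nonneg (by positivity) _
  positivity

lemma heatKernel_le_heatKernel_zero (z : Rn n) (ht : 0 ≤ t) :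
    heatKernel n z t ≤ heatKernel n 0 t := by
  unfold heatKernel
  gcongr
  simp

lemma heatKernel_eq_mul_exp (z : Rn n) :
    heatKernel n z t = (4 * π * t) ^ (-(n : ℝ) / 2) * exp (-(4 * t)⁻¹ * ‖z‖ ^ 2) := by
  unfold heatKernel
  ring_nf

lemma integrable_heatKernel (ht : 0 < t) : Integrable fun z : Rn n => heatKernel n z t := by
  simp_rw [heatKernel_eq_mul_exp]
  refine Integrable.const_mul ?_ _
  have h := (GaussianFourier.integrable_cexp_neg_mul_sq_norm_add (V := Rn n)
    (b := ((4 * t)⁻¹ : ℝ)) (by simpa using ht) 0 0).norm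
  refine h.congr (ae_of_all _ fun z => ?_)
  simp [Complex.norm_exp]
  exact Or.inl (by norm_cast)

lemma integral_heatKernel (ht : 0 < t) : ∫ z : Rn n, heatKernel n z t = 1 := by
  simp_rw [heatKernel_eq_mul_exp]
  rw [integral_const_mul, GaussianFourier.integral_rexp_neg_mul_sq_norm (by positivity),
    finrank_euclideanSpace_fin, div_inv_eq_mul, show π * (4 * t) = 4 * π * t by ring,
    ← rpow_add (by positivity)]
  simp [neg_div]

lemma heatKernel_one (w : Rn n) :
    heatKernel n w 1 = ((4 * π) ^ ((n : ℝ) / 2))⁻¹ * exp (-‖w‖ ^ 2 / 4) := by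
  rw [heatKernel, mul_one, mul_one, neg_div, rpow_neg (by positivity)]

lemma heatKernel_sqrt_smul (w : Rn n) (ht : 0 < t) :
    heatKernel n (√t • w) t = (√t ^ n)⁻¹ * heatKernel n w 1 := by
  have hpow : t ^ ((n : ℝ) / 2) = √t ^ n := by
    rw [sqrt_eq_rpow, ← rpow_natCast, ← rpow_mul ht.le]
    ring_nf
  simp only [heatKernel, norm_smul, norm_eq_abs, abs_of_nonneg (sqrt_nonneg t), mul_pow,
    sq_sqrt ht.le, mul_one]
  rw [mul_rpow (by positivity) ht.le, neg_div, rpow_neg ht.le, rpow_neg (by positivity), hpow]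
  field_simp

lemma setIntegral_compl_ball_heatKernel (x : Rn n) (ht : 0 < t) (K : ℝ) :
    ∫ y in (ball x (K * √t))ᶜ, heatKernel n (x - y) t =
      ((4 * π) ^ ((n : ℝ) / 2))⁻¹ * ∫ w in (ball (0 : Rn n) K)ᶜ, exp (-‖w‖ ^ 2 / 4) := by
  have hs : 0 < √t := sqrt_pos.2 ht
  have htrans : ∫ y in (ball x (K * √t))ᶜ, heatKernel n (x - y) t =
      ∫ z in (ball 0 (K * √t))ᶜ, heatKernel n z t := by
    have hpre : (fun y => x - y) ⁻¹' (ball (0 : Rn n) (K * √t))ᶜ = (ball x (K * √t))ᶜ := by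
      ext y
      simp [dist_eq_norm, norm_sub_rev]
    rw [← hpre]
    exact (Measure.measurePreserving_sub_left volume x).setIntegral_preimage_emb
      (MeasurableEquiv.subLeft x).measurableEmbedding (fun z => heatKernel n z t) _
  have hscale : √t • (ball (0 : Rn n) K)ᶜ = (ball 0 (K * √t))ᶜ := by
    rw [compl_eq_univ_sdiff, compl_eq_univ_sdiff, smul_set_sdiff₀ hs.ne', smul_set_univ₀ hs.ne',
      _root_.smul_ball hs.ne', smul_zero, norm_eq_abs, abs_of_pos hs, mul_comm]
  calc ∫ y in (ball x (K * √t))ᶜ, heatKernel n (x - y) t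
      = √t ^ n * ∫ w in (ball (0 : Rn n) K)ᶜ, heatKernel n (√t • w) t := by
        rw [htrans, Measure.setIntegral_comp_smul_of_pos _ (fun z => heatKernel n z t) _ hs, hscale,
          finrank_euclideanSpace_fin, smul_eq_mul, ← mul_assoc, mul_inv_cancel₀ (by positivity),
          one_mul]
    _ = ((4 * π) ^ ((n : ℝ) / 2))⁻¹ * ∫ w in (ball (0 : Rn n) K)ᶜ, exp (-‖w‖ ^ 2 / 4) := by
        simp_rw [heatKernel_sqrt_smul n _ ht, heatKernel_one]
        rw [integral_const_mul, integral_const_mul, ← mul_assoc, ← mul_assoc,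
          mul_inv_cancel₀ (by positivity), one_mul]

lemma heatKernel_zero_mul_pow_le {K : ℝ} (ht : 0 < t) (hK : 0 ≤ K) :
    heatKernel n 0 t * (K * √t) ^ n ≤ K ^ n := by
  have hpeak : ((4 * π) ^ ((n : ℝ) / 2))⁻¹ ≤ 1 :=
    inv_le_one_of_one_le₀ (one_le_rpow (by linarith [pi_gt_three]) (by positivity))
  have h := heatKernel_sqrt_smul n (0 : Rn n) ht
  rw [smul_zero, heatKernel_one, norm_zero] at h
  rw [h, mul_pow]
  calc (√t ^ n)⁻¹ * (((4 * π) ^ ((n : ℝ) / 2))⁻¹ * exp (-0 ^ 2 / 4)) * (K ^ n * √t ^ n)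
      = K ^ n * ((4 * π) ^ ((n : ℝ) / 2))⁻¹ := by
        field_simp
        simp
    _ ≤ K ^ n := mul_le_of_le_one_right (by positivity) hpeak

end HeatKernel

section BoundedMeanOscillation

variable {n : ℕ} {F : Type*} [NormedAddCommGroup F] [NormedSpace ℝ F] {f : Rn n → F} {M : ℝ}

lemma norm_ballAvg_le (hf : ∀ y, ‖f y‖ ≤ M) (x : Rn n) (r : ℝ) : ‖ballAvg f x r‖ ≤ M := by
  have hM : 0 ≤ M := (norm_nonneg _).trans (hf 0)
  have hint : ‖∫ y in ball x r, f y‖ ≤ M * volume.real (ball x r) :=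
    norm_setIntegral_le_of_norm_le_const_ae measure_ball_lt_top (ae_of_all _ fun y => hf y)
  rw [ballAvg, setAverage_eq, norm_smul, norm_inv, norm_eq_abs, abs_of_nonneg measureReal_nonneg]
  rcases eq_or_ne (volume.real (ball x r)) 0 with h | h
  · simpa [h] using hM
  · calc (volume.real (ball x r))⁻¹ * ‖∫ y in ball x r, f y‖
        ≤ (volume.real (ball x r))⁻¹ * (M * volume.real (ball x r)) := by gcongr
      _ = M := by field_simp

lemma norm_sub_ballAvg_le (hf : ∀ y, ‖f y‖ ≤ M) (x y : Rn n) (r : ℝ) :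
    ‖f y - ballAvg f x r‖ ≤ 2 * M := by
  linarith [norm_sub_le (f y) (ballAvg f x r), hf y, norm_ballAvg_le hf x r]

lemma bddAbove_bmoSet (hf : ∀ y, ‖f y‖ ≤ M) (R : ℝ≥0∞) : BddAbove (bmoSet f R) := by
  refine ⟨2 * M * volume.real (ball (0 : Rn n) 1), ?_⟩
  rintro _ ⟨x, r, hr, -, rfl⟩
  have hvol : volume.real (ball x r) = r ^ n * volume.real (ball (0 : Rn n) 1) := by
    simp only [Measure.real, Measure.addHaar_ball_of_pos volume x hr, finrank_euclideanSpace_fin,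
      ENNReal.toReal_mul, ENNReal.toReal_ofReal (pow_nonneg hr.le n)]
  have hint : ∫ y in ball x r, ‖f y - ballAvg f x r‖ ≤ 2 * M * volume.real (ball x r) :=
    (le_abs_self _).trans <| norm_setIntegral_le_of_norm_le_const_ae measure_ball_lt_top
      (ae_of_all _ fun y => (norm_norm _).trans_le (norm_sub_ballAvg_le hf x y r))
  calc (r ^ n)⁻¹ * ∫ y in ball x r, ‖f y - ballAvg f x r‖
      ≤ (r ^ n)⁻¹ * (2 * M * volume.real (ball x r)) := by gcongr
    _ = 2 * M * volume.real (ball (0 : Rn n) 1) := by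
      rw [hvol]
      field_simp

lemma bmoSeminorm_nonneg (R : ℝ≥0∞) : 0 ≤ bmoSeminorm f R := by
  refine Real.sSup_nonneg fun a ⟨x, r, hr, _, ha⟩ => ha ▸ ?_
  have : 0 ≤ ∫ y in ball x r, ‖f y - ballAvg f x r‖ := integral_nonneg fun _ => norm_nonneg _
  positivity

lemma setIntegral_ball_norm_sub_ballAvg_le {R : ℝ≥0∞} (hf : BddAbove (bmoSet f R)) (x : Rn n)
    {r : ℝ} (hr : 0 < r) (hrR : ENNReal.ofReal r ≤ R) :
    ∫ y in ball x r, ‖f y - ballAvg f x r‖ ≤ r ^ n * bmoSeminorm f R := by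
  have hmem : (r ^ n)⁻¹ * ∫ y in ball x r, ‖f y - ballAvg f x r‖ ∈ bmoSet f R :=
    ⟨x, r, hr, hrR, rfl⟩
  have := le_csSup hf hmem
  rwa [inv_mul_le_iff₀ (by positivity)] at this

end BoundedMeanOscillation

section KernelAverage

variable {α E : Type*} [MeasurableSpace α] {μ : Measure α} [NormedAddCommGroup E]
  [NormedSpace ℝ E] [CompleteSpace E]

lemma norm_integral_smul_sub_le {g : α → ℝ} {f : α → E} {c : E} {s : Set α} {A D : ℝ}
    (hg_nonneg : ∀ y, 0 ≤ g y) (hg_int : Integrable g μ) (hg_one : ∫ y, g y ∂μ = 1)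
    (hs : MeasurableSet s) (hμs : μ s < ∞) (hgA : ∀ y ∈ s, g y ≤ A)
    (hf : AEStronglyMeasurable f μ) (hfD : ∀ y, ‖f y - c‖ ≤ D) :
    ‖∫ y, g y • f y ∂μ - c‖ ≤ A * ∫ y in s, ‖f y - c‖ ∂μ + D * ∫ y in sᶜ, g y ∂μ := by
  have hnorm : ∀ y, ‖g y • (f y - c)‖ = g y * ‖f y - c‖ := fun y => by
    rw [norm_smul, norm_eq_abs, abs_of_nonneg (hg_nonneg y)]
  have hfc_meas : AEStronglyMeasurable (fun y => f y - c) μ := hf.sub aestronglyMeasurable_const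
  have hgfc : Integrable (fun y => g y • (f y - c)) μ :=
    (hg_int.mul_const D).mono' (hg_int.aestronglyMeasurable.smul hfc_meas) <| ae_of_all _ fun y => by
      rw [hnorm]; exact mul_le_mul_of_nonneg_left (hfD y) (hg_nonneg y)
  have hgf : Integrable (fun y => g y • f y) μ :=
    (hgfc.add (hg_int.smul_const c)).congr <| ae_of_all _ fun y => by
      simp only [Pi.add_apply, ← smul_add, sub_add_cancel]
  have hcentre : ∫ y, g y • f y ∂μ - c = ∫ y, g y • (f y - c) ∂μ := by
    simp_rw [smul_sub]
    rw [integral_sub hgf (hg_int.smul_const c), integral_smul_const, hg_one, one_smul]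
  have hinner : ‖∫ y in s, g y • (f y - c) ∂μ‖ ≤ A * ∫ y in s, ‖f y - c‖ ∂μ := by
    rw [← integral_const_mul]
    refine norm_integral_le_of_norm_le ?_ ((ae_restrict_iff' hs).2 <| ae_of_all _ fun y hy => ?_)
    · exact (Measure.integrableOn_of_bounded hμs.ne hfc_meas.norm
        (ae_of_all _ fun y => (norm_norm _).trans_le (hfD y))).const_mul A
    · rw [hnorm]
      exact mul_le_mul_of_nonneg_right (hgA y hy) (norm_nonneg _)
  have houter : ‖∫ y in sᶜ, g y • (f y - c) ∂μ‖ ≤ D * ∫ y in sᶜ, g y ∂μ := by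
    rw [← integral_const_mul]
    refine norm_integral_le_of_norm_le (hg_int.const_mul D).integrableOn (ae_of_all _ fun y => ?_)
    rw [hnorm, mul_comm D]
    exact mul_le_mul_of_nonneg_left (hfD y) (hg_nonneg y)
  calc ‖∫ y, g y • f y ∂μ - c‖
      = ‖(∫ y in s, g y • (f y - c) ∂μ) + ∫ y in sᶜ, g y • (f y - c) ∂μ‖ := by
        rw [hcentre, integral_add_compl hs hgfc]
    _ ≤ A * ∫ y in s, ‖f y - c‖ ∂μ + D * ∫ y in sᶜ, g y ∂μ :=
        (norm_add_le _ _).trans (add_le_add hinner houter)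

end KernelAverage

theorem statement3_general (n l : ℕ)
    (u₀ : Rn n → Rn l) (hmeas : Measurable u₀)
    (hbdd : BddAbove (Set.range fun y => ‖u₀ y‖)) :
    ∀ x : Rn n, ∀ t : ℝ, 0 < t → ∀ K : ℝ, 0 < K →
      ‖caloricExt u₀ x t - ballAvg u₀ x (K * Real.sqrt t)‖ ≤
        K ^ n * bmoSeminorm u₀ (ENNReal.ofReal (K * Real.sqrt t)) +
          2 * (⨆ y : Rn n, ‖u₀ y‖) * ((4 * Real.pi) ^ ((n : ℝ) / 2))⁻¹ *
            ∫ y in (ball (0 : Rn n) K)ᶜ, Real.exp (-‖y‖ ^ 2 / 4) := by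
  intro x t ht K hK
  set M := ⨆ y : Rn n, ‖u₀ y‖
  set r := K * √t
  have hM : ∀ y, ‖u₀ y‖ ≤ M := le_ciSup hbdd
  have hbmo := setIntegral_ball_norm_sub_ballAvg_le (bddAbove_bmoSet hM _) x
    (mul_pos hK (sqrt_pos.2 ht)) le_rfl
  have hkernel := norm_integral_smul_sub_le (μ := volume) (s := ball x r)
    (fun y => heatKernel_nonneg n (x - y) ht.le)
    ((integrable_heatKernel n ht).comp_sub_left x)
    ((integral_sub_left_eq_self _ _ x).trans (integral_heatKernel n ht))
    measurableSet_ball measure_ball_lt_top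
    (fun y _ => heatKernel_le_heatKernel_zero n (x - y) ht.le)
    hmeas.aestronglyMeasurable (norm_sub_ballAvg_le hM x · r)
  rw [setIntegral_compl_ball_heatKernel n x ht] at hkernel
  calc ‖caloricExt u₀ x t - ballAvg u₀ x r‖
      ≤ heatKernel n 0 t * (r ^ n * bmoSeminorm u₀ (ENNReal.ofReal r)) + 2 * M *
          (((4 * π) ^ ((n : ℝ) / 2))⁻¹ * ∫ w in (ball (0 : Rn n) K)ᶜ, exp (-‖w‖ ^ 2 / 4)) :=
        hkernel.trans (by gcongr; exact heatKernel_nonneg n 0 ht.le)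
    _ ≤ K ^ n * bmoSeminorm u₀ (ENNReal.ofReal r) + 2 * M * ((4 * π) ^ ((n : ℝ) / 2))⁻¹ *
          ∫ w in (ball (0 : Rn n) K)ᶜ, exp (-‖w‖ ^ 2 / 4) := by
        rw [← mul_assoc, ← mul_assoc (2 * M)]
        gcongr
        · exact bmoSeminorm_nonneg _
        · exact heatKernel_zero_mul_pow_le n ht hK.le

/-- comparison of the caloric extension with local averages. -/
theorem statement3 (n l : ℕ) (hn : 1 ≤ n)
    (u₀ : Rn n → Rn l) (hmeas : Measurable u₀)
    (hbdd : BddAbove (Set.range fun y => ‖u₀ y‖)) :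
    ∀ x : Rn n, ∀ t : ℝ, 0 < t → ∀ K : ℝ, 0 < K →
      ‖caloricExt u₀ x t - ballAvg u₀ x (K * Real.sqrt t)‖ ≤
        K ^ n * bmoSeminorm u₀ (ENNReal.ofReal (K * Real.sqrt t)) +
          2 * (⨆ y : Rn n, ‖u₀ y‖) * ((4 * Real.pi) ^ ((n : ℝ) / 2))⁻¹ *
            ∫ y in (ball (0 : Rn n) K)ᶜ, Real.exp (-‖y‖ ^ 2 / 4) :=
  statement3_general n l u₀ hmeas hbdd
end

section
/- Subharmonicity of the squared distance to the target along the extended flow: let Π̃ ∈ C^∞(ℝ^l, ℝ^l), let U ⊂ ℝ^l be open, and assume that ⟨y - Π̃(y), DΠ̃(y)v⟩ = 0 for every y ∈ U and every v ∈ ℝ^l. Set Q(y) = y - Π̃(y). If u : ℝⁿ × (0,T) → ℝ^l is a smooth map with u(x,t) ∈ U for all (x,t) and u solves ∂_t u - Δu = -D²Π̃(u)(∇u, ∇u) := -Σ_{i=1}^n D²Π̃(u)(∂_i u, ∂_i u), then the function ρ = ½ |Q(u)|² satisfies (∂_t - Δ)ρ = -|∇(Q ∘ u)|² ≤ 0 on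 ℝⁿ × (0,T). -/
open MeasureTheory Metric Set
open scoped ENNReal

/-- Spatial Laplacian of a time-dependent map, as the sum of the second
directional derivatives along the standard basis. -/
noncomputable def lap {n : ℕ} {F : Type*} [NormedAddCommGroup F] [NormedSpace ℝ F]
    (w : Rn n → ℝ → F) (x : Rn n) (t : ℝ) : F :=
  ∑ i : Fin n, fderiv ℝ
    (fun z => fderiv ℝ (fun z' => w z' t) z (EuclideanSpace.single i 1)) x
    (EuclideanSpace.single i 1)

set_option maxHeartbeats 2000000 in
/-- subharmonicity of the squared distance to the target along the
extended flow: `(∂_t - Δ)(½|Q(u)|²) = -|∇(Q∘u)|² ≤ 0` where `Q(y) = y - Π̃(y)`. -/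
theorem statement15 (n l : ℕ) (hn : 1 ≤ n)
    (P : Rn l → Rn l) (hP : ContDiff ℝ (⊤ : ℕ∞) P)
    (U : Set (Rn l)) (hU : IsOpen U)
    (horth : ∀ y ∈ U, ∀ v : Rn l, (inner ℝ (y - P y) (fderiv ℝ P y v) : ℝ) = 0)
    (T : ℝ) (u : Rn n → ℝ → Rn l)
    (hsmooth : ContDiffOn ℝ (⊤ : ℕ∞) (fun p : Rn n × ℝ => u p.1 p.2) (univ ×ˢ Ioo (0:ℝ) T))
    (hrange : ∀ x t, 0 < t → t < T → u x t ∈ U)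
    (heq : ∀ x t, 0 < t → t < T →
      deriv (fun s => u x s) t - lap u x t =
        -∑ i : Fin n, (fderiv ℝ (fderiv ℝ P) (u x t)) (spd u x t i) (spd u x t i)) :
    ∀ x t, 0 < t → t < T →
      (deriv (fun s => (1 / 2 : ℝ) * ‖u x s - P (u x s)‖ ^ 2) t -
          lap (fun z s => (1 / 2 : ℝ) * ‖u z s - P (u z s)‖ ^ 2) x t =
        -∑ i : Fin n,
          ‖fderiv ℝ (fun z => u z t - P (u z t)) x (EuclideanSpace.single i 1)‖ ^ 2) ∧
      deriv (fun s => (1 / 2 : ℝ) * ‖u x s - P (u x s)‖ ^ 2) t -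
          lap (fun z s => (1 / 2 : ℝ) * ‖u z s - P (u z s)‖ ^ 2) x t ≤ 0 := by
  intro x t ht htT
  classical
  have htO : t ∈ Ioo (0:ℝ) T := ⟨ht, htT⟩
  -- spatial slice is smooth on all of ℝⁿ
  have hft : ContDiff ℝ (⊤ : ℕ∞) (fun z : Rn n => u z t) := by
    rw [← contDiffOn_univ]
    exact hsmooth.comp (contDiff_id.prodMk contDiff_const).contDiffOn
      (fun z _ => ⟨mem_univ _, htO⟩)
  -- time slice is smooth near t
  have hgt : ContDiffAt ℝ (⊤ : ℕ∞) (fun s => u x s) t :=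
    (hsmooth.comp (contDiff_const.prodMk contDiff_id).contDiffOn
      (fun s hs => ⟨mem_univ _, hs⟩)).contDiffAt (isOpen_Ioo.mem_nhds htO)
  set y : Rn l := u x t with hy
  have hyU : y ∈ U := hrange x t ht htT
  set B : Rn n → (Rn n →L[ℝ] Rn l) := fderiv ℝ (fun z : Rn n => u z t) with hB
  have hBC : ContDiff ℝ (⊤ : ℕ∞) B := hft.fderiv_right (by simp)
  set DP : Rn l → (Rn l →L[ℝ] Rn l) := fderiv ℝ P with hDP
  have hDPC : ContDiff ℝ (⊤ : ℕ∞) DP := hP.fderiv_right (by simp)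
  have hfd : ∀ z, HasFDerivAt (fun z : Rn n => u z t) (B z) z :=
    fun z => (hft.differentiable (by simp) z).hasFDerivAt
  have hPd : ∀ w : Rn l, HasFDerivAt P (DP w) w :=
    fun w => (hP.differentiable (by simp) w).hasFDerivAt
  have hDPd : ∀ w : Rn l, HasFDerivAt DP (fderiv ℝ DP w) w :=
    fun w => (hDPC.differentiable (by simp) w).hasFDerivAt
  set q : Rn n → Rn l := fun z => u z t - P (u z t) with hqdef
  set Qd : Rn n → (Rn n →L[ℝ] Rn l) := fun z => B z - (DP (u z t)).comp (B z) with hQd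
  have hqd : ∀ z, HasFDerivAt q (Qd z) z :=
    fun z => (hfd z).sub ((hPd (u z t)).comp z (hfd z))
  -- derivative of ρ_t
  have hρd : ∀ z, HasFDerivAt (fun z' : Rn n => (1 / 2 : ℝ) * ‖u z' t - P (u z' t)‖ ^ 2)
      ((1/2 : ℝ) • ((fderivInnerCLM ℝ (q z, q z)).comp ((Qd z).prod (Qd z)))) z := by
    intro z
    have h1 := ((hqd z).inner ℝ (hqd z)).const_mul (1/2 : ℝ)
    simp only [← real_inner_self_eq_norm_sq]
    exact h1
  -- pointwise formula for fderiv of ρ_t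
  have hg : ∀ i : Fin n, (fun z => fderiv ℝ
        (fun z' : Rn n => (1 / 2 : ℝ) * ‖u z' t - P (u z' t)‖ ^ 2) z (EuclideanSpace.single i 1))
      = fun z => (inner ℝ (q z) (Qd z (EuclideanSpace.single i 1)) : ℝ) := by
    intro i
    funext z
    rw [(hρd z).fderiv]
    simp only [ContinuousLinearMap.smul_apply, ContinuousLinearMap.comp_apply,
      ContinuousLinearMap.prod_apply, fderivInnerCLM_apply]
    rw [real_inner_comm (Qd z (EuclideanSpace.single i 1)) (q z), smul_eq_mul]
    ring
  -- second derivative machinery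
  set B' : Rn n →L[ℝ] (Rn n →L[ℝ] Rn l) := fderiv ℝ B x with hB'
  have hBd : HasFDerivAt B B' x := (hBC.differentiable (by simp) x).hasFDerivAt
  have hBi : ∀ i : Fin n, HasFDerivAt (fun z => B z (EuclideanSpace.single i 1))
      (B'.flip (EuclideanSpace.single i 1)) x := by
    intro i
    have h := hBd.clm_apply (hasFDerivAt_const (EuclideanSpace.single i 1 : Rn n) x)
    simpa using h
  have hc : HasFDerivAt (fun z => DP (u z t)) ((fderiv ℝ DP y).comp (B x)) x :=
    (hDPd y).comp x (hfd x)
  -- second derivative of q in direction i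
  have hQdi : ∀ i : Fin n, HasFDerivAt (fun z => Qd z (EuclideanSpace.single i 1))
      (B'.flip (EuclideanSpace.single i 1) -
        ((DP y).comp (B'.flip (EuclideanSpace.single i 1)) +
          ((fderiv ℝ DP y).comp (B x)).flip (B x (EuclideanSpace.single i 1)))) x := by
    intro i
    have h2 : HasFDerivAt (fun z => DP (u z t) (B z (EuclideanSpace.single i 1)))
        ((DP y).comp (B'.flip (EuclideanSpace.single i 1)) +
          ((fderiv ℝ DP y).comp (B x)).flip (B x (EuclideanSpace.single i 1))) x :=
      hc.clm_apply (hBi i)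
    have h3 := (hBi i).sub h2
    exact h3
  -- Laplacian of u
  have hLu : lap u x t = ∑ i : Fin n, B' (EuclideanSpace.single i 1) (EuclideanSpace.single i 1) := by
    unfold lap
    refine Finset.sum_congr rfl fun i _ => ?_
    rw [show (fun z => fderiv ℝ (fun z' => u z' t) z (EuclideanSpace.single i 1))
        = fun z => B z (EuclideanSpace.single i 1) from rfl]
    rw [(hBi i).fderiv]
    rfl
  -- abbreviations for the second-order quantities
  set L : Rn l := ∑ i : Fin n, B' (EuclideanSpace.single i 1) (EuclideanSpace.single i 1) with hL
  set w : Rn l := ∑ i : Fin n,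
    (fderiv ℝ DP y) (B x (EuclideanSpace.single i 1)) (B x (EuclideanSpace.single i 1)) with hw
  set S : Fin n → Rn l := fun i => B' (EuclideanSpace.single i 1) (EuclideanSpace.single i 1) -
      (DP y (B' (EuclideanSpace.single i 1) (EuclideanSpace.single i 1)) +
        (fderiv ℝ DP y) (B x (EuclideanSpace.single i 1)) (B x (EuclideanSpace.single i 1))) with hS
  -- Laplacian of ρ
  have hLρ : lap (fun z s => (1 / 2 : ℝ) * ‖u z s - P (u z s)‖ ^ 2) x t
      = ∑ i : Fin n, ((inner ℝ (Qd x (EuclideanSpace.single i 1)) (Qd x (EuclideanSpace.single i 1)) : ℝ)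
          + (inner ℝ (q x) (S i) : ℝ)) := by
    unfold lap
    refine Finset.sum_congr rfl fun i _ => ?_
    rw [show (fun z' : Rn n => (fun z s => (1 / 2 : ℝ) * ‖u z s - P (u z s)‖ ^ 2) z' t)
        = fun z' : Rn n => (1 / 2 : ℝ) * ‖u z' t - P (u z' t)‖ ^ 2 from rfl]
    rw [hg i]
    have hin := (hqd x).inner ℝ (hQdi i)
    rw [hin.fderiv]
    simp only [ContinuousLinearMap.comp_apply, ContinuousLinearMap.prod_apply,
      fderivInnerCLM_apply, ContinuousLinearMap.sub_apply, ContinuousLinearMap.add_apply,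
      ContinuousLinearMap.flip_apply]
    rw [add_comm]
  -- time derivative of ρ
  have hut : HasDerivAt (fun s => u x s) (deriv (fun s => u x s) t) t :=
    (hgt.differentiableAt (by simp)).hasDerivAt
  set ut : Rn l := deriv (fun s => u x s) t with hut'
  have hqs : HasDerivAt (fun s => u x s - P (u x s)) (ut - DP y ut) t := by
    have h2 : HasDerivAt (fun s => P (u x s)) (DP y ut) t := by
      have h := (hPd y).comp_hasDerivAt t hut
      exact h
    exact hut.sub h2
  have hρt : deriv (fun s => (1 / 2 : ℝ) * ‖u x s - P (u x s)‖ ^ 2) t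
      = (inner ℝ (q x) (ut - DP y ut) : ℝ) := by
    have h1 := (hqs.inner ℝ hqs).const_mul (1/2 : ℝ)
    have h2 : (fun s => (1 / 2 : ℝ) * ‖u x s - P (u x s)‖ ^ 2)
        = fun s => (1 / 2 : ℝ) * (inner ℝ (u x s - P (u x s)) (u x s - P (u x s)) : ℝ) := by
      funext s; rw [real_inner_self_eq_norm_sq]
    rw [h2, h1.deriv]
    have : (inner ℝ (ut - DP y ut) (u x t - P (u x t)) : ℝ)
        = (inner ℝ (u x t - P (u x t)) (ut - DP y ut) : ℝ) := real_inner_comm _ _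
    rw [this]
    show (1/2 : ℝ) * ((inner ℝ (q x) (ut - DP y ut) : ℝ) + (inner ℝ (q x) (ut - DP y ut) : ℝ))
        = (inner ℝ (q x) (ut - DP y ut) : ℝ)
    ring
  -- the PDE, rephrased
  have hUL : ut - L = -w := by
    rw [← hLu]
    have h := heq x t ht htT
    rw [h]
    rw [hw]
    congr 1
  -- sum of the second-order terms
  have hsumS : ∑ i : Fin n, S i = L - DP y L - w := by
    rw [hS, hL, hw]
    rw [Finset.sum_sub_distrib, Finset.sum_add_distrib, ← map_sum]
    abel
  -- the key vector identity
  have hvec : (ut - DP y ut) - ∑ i : Fin n, S i = DP y w := by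
    rw [hsumS]
    have h1 : (ut - DP y ut) - (L - DP y L - w) = (ut - L) - DP y (ut - L) + w := by
      rw [map_sub]; abel
    rw [h1, hUL, map_neg]
    abel
  -- orthogonality kills the remaining inner product
  have h0 : (inner ℝ (q x) (DP y w) : ℝ) = 0 := horth y hyU w
  -- final computation
  have key : deriv (fun s => (1 / 2 : ℝ) * ‖u x s - P (u x s)‖ ^ 2) t -
      lap (fun z s => (1 / 2 : ℝ) * ‖u z s - P (u z s)‖ ^ 2) x t =
      -∑ i : Fin n, ‖fderiv ℝ q x (EuclideanSpace.single i 1)‖ ^ 2 := by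
    rw [hρt, hLρ]
    have hfq : ∀ i : Fin n, ‖fderiv ℝ q x (EuclideanSpace.single i 1)‖ ^ 2
        = (inner ℝ (Qd x (EuclideanSpace.single i 1)) (Qd x (EuclideanSpace.single i 1)) : ℝ) := by
      intro i
      rw [(hqd x).fderiv, real_inner_self_eq_norm_sq]
    rw [Finset.sum_add_distrib, ← inner_sum]
    have h1 : (inner ℝ (q x) (ut - DP y ut) : ℝ) - (inner ℝ (q x) (∑ i : Fin n, S i) : ℝ)
        = (inner ℝ (q x) ((ut - DP y ut) - ∑ i : Fin n, S i) : ℝ) := (inner_sub_right _ _ _).symm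
    have h2 : (inner ℝ (q x) (ut - DP y ut) : ℝ) - (inner ℝ (q x) (∑ i : Fin n, S i) : ℝ) = 0 := by
      rw [h1, hvec, h0]
    have h3 : ∑ i : Fin n, ‖fderiv ℝ q x (EuclideanSpace.single i 1)‖ ^ 2
        = ∑ i : Fin n, (inner ℝ (Qd x (EuclideanSpace.single i 1)) (Qd x (EuclideanSpace.single i 1)) : ℝ) :=
      Finset.sum_congr rfl fun i _ => hfq i
    rw [h3]
    linarith
  refine ⟨key, ?_⟩
  rw [key]
  simp only [neg_nonpos]
  exact Finset.sum_nonneg fun i _ => sq_nonneg _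
end
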